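/- For k ≥ 1, consider the commutative square in Cat whose corners are Λ⁰, Λ^{k−1}, Λ¹ and Λ^k, with: u : Λ⁰ → Λ^{k−1} sending the unique element to the vertex k−1; v : Λ⁰ → Λ¹ sending the unique element to the vertex 0; i : Λ^{k−1} → Λ^k the inclusion (identity on vertices 0,…,k−1 and edges e₀,…,e_{k−2}); and j : Λ¹ → Λ^k sending vertex 0 to vertex k−1, vertex 1 to vertex k, and the edge e₀ to the edge e_{k−1}. Then i ∘ u = j ∘ v, and this square is a pushout square in the category Cat of categories. -/

import Mathlib

open CategoryTheory

/-- The poset `Λ^k`: elements are the vertices `0, …, k` (left summand) and the edges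
`e₀, …, e_{k−1}` (right summand), ordered so that `eᵢ ≤ i` and `eᵢ ≤ i+1` and there are no
other relations between distinct elements. -/
def Lambda (k : ℕ) : Type := Fin (k + 1) ⊕ Fin k

namespace Lambda

/-- The order relation on `Λ^k`. -/
def le {k : ℕ} : Lambda k → Lambda k → Prop
  | Sum.inl i, Sum.inl j => i = j
  | Sum.inl _, Sum.inr _ => False
  | Sum.inr i, Sum.inl j => (j : ℕ) = i ∨ (j : ℕ) = (i : ℕ) + 1
  | Sum.inr i, Sum.inr j => i = j

instance (k : ℕ) : PartialOrder (Lambda k) where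
  le := le
  le_refl x := by cases x <;> simp [le]
  le_trans x y z hxy hyz := by cases x <;> cases y <;> cases z <;> simp_all [le]
  le_antisymm x y hxy hyx := by cases x <;> cases y <;> simp_all [le] <;> rfl

/-- The vertex `i` of `Λ^k`. -/
abbrev vertex {k : ℕ} (i : Fin (k + 1)) : Lambda k := Sum.inl i

/-- The edge `eᵢ` of `Λ^k`. -/
abbrev edge {k : ℕ} (i : Fin k) : Lambda k := Sum.inr i

end Lambda

/-- `u : Λ⁰ ⥤ Λ^{k-1}` (here `k - 1 = m`), sending the unique element to the last
vertex `m = k - 1`. -/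
def uF (m : ℕ) : Lambda 0 ⥤ Lambda m :=
  Monotone.functor
    (f := fun _ => Lambda.vertex ⟨m, Nat.lt_succ_self m⟩) (fun _ _ _ => le_refl _)

/-- `v : Λ⁰ ⥤ Λ¹`, sending the unique element to the vertex `0`. -/
def vF : Lambda 0 ⥤ Lambda 1 :=
  Monotone.functor
    (f := fun _ => Lambda.vertex ⟨0, by omega⟩) (fun _ _ _ => le_refl _)

/-- The underlying map of the inclusion `i : Λ^{k-1} → Λ^k` (here `k - 1 = m`). -/
def iMap (m : ℕ) : Lambda m → Lambda (m + 1)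
  | Sum.inl i => Sum.inl i.castSucc
  | Sum.inr e => Sum.inr e.castSucc

theorem iMap_mono (m : ℕ) : Monotone (iMap m) := by
  intro x y h
  change Lambda.le x y at h
  change Lambda.le (iMap m x) (iMap m y)
  cases x <;> cases y <;>
    simp_all [iMap, Lambda.le, show ∀ a b : Lambda m, (a ≤ b) = Lambda.le a b from
      fun _ _ => rfl, show ∀ a b : Lambda (m + 1), (a ≤ b) = Lambda.le a b from
      fun _ _ => rfl]

/-- The inclusion functor `i : Λ^{k-1} ⥤ Λ^k` (identity on the vertices `0, …, k-1` and the
edges `e₀, …, e_{k-2}`). -/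
def iF (m : ℕ) : Lambda m ⥤ Lambda (m + 1) := Monotone.functor (iMap_mono m)

/-- The underlying map of `j : Λ¹ → Λ^k`, sending vertex `0` to vertex `k-1`, vertex `1` to
vertex `k` and the edge `e₀` to the edge `e_{k-1}` (here `k - 1 = m`). -/
def jMap (m : ℕ) : Lambda 1 → Lambda (m + 1)
  | Sum.inl v => Sum.inl ⟨m + v, by have := v.isLt; omega⟩
  | Sum.inr _ => Sum.inr ⟨m, Nat.lt_succ_self m⟩

theorem jMap_mono (m : ℕ) : Monotone (jMap m) := by
  intro x y h
  change Lambda.le x y at h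
  change Lambda.le (jMap m x) (jMap m y)
  cases x <;> cases y <;>
    simp_all [jMap, Lambda.le, show ∀ a b : Lambda 1, (a ≤ b) = Lambda.le a b from
      fun _ _ => rfl, show ∀ a b : Lambda (m + 1), (a ≤ b) = Lambda.le a b from
      fun _ _ => rfl] <;> omega

/-- The functor `j : Λ¹ ⥤ Λ^k`. -/
def jF (m : ℕ) : Lambda 1 ⥤ Lambda (m + 1) := Monotone.functor (jMap_mono m)


/-!
`Λ^{m+1}` has no chains `x < y < z`, so a functor out of it is an assignment of objects together
with a morphism for each strict relation `eᵢ < i`, `eᵢ < i + 1`; composition imposes nothing.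
Every element and every relation of `Λ^{m+1}` comes from `Λ^m` (through `i`) or from `Λ¹`
(through `j`), and the two overlap only in the vertex `m`, the image of `Λ⁰`. Hence two functors
on `Λ^m` and `Λ¹` that agree on that vertex glue to a unique functor on `Λ^{m+1}`.
-/

namespace CategoryTheory.Functor

variable {P C : Type*} [PartialOrder P] [Category C]

open Classical in
noncomputable def ofLT (hP : ∀ ⦃x y z : P⦄, x < y → ¬ y < z) (obj : P → C)
    (map : ∀ ⦃x y : P⦄, x < y → (obj x ⟶ obj y)) : P ⥤ C where
  obj := obj
  map {x y} f :=
    if hxy : x = y then eqToHom (congrArg obj hxy) else map (lt_of_le_of_ne (leOfHom f) hxy)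
  map_id x := dif_pos rfl
  map_comp {x y z} f g := by
    obtain rfl | hxy := eq_or_ne x y
    · simp
    obtain rfl | hyz := eq_or_ne y z
    · simp
    exact (hP (lt_of_le_of_ne (leOfHom f) hxy) (lt_of_le_of_ne (leOfHom g) hyz)).elim

theorem ofLT_map_of_ne (hP : ∀ ⦃x y z : P⦄, x < y → ¬ y < z) (obj : P → C)
    (map : ∀ ⦃x y : P⦄, x < y → (obj x ⟶ obj y)) {x y : P} (f : x ⟶ y) (hxy : x ≠ y) :
    (ofLT hP obj map).map f = map (lt_of_le_of_ne (leOfHom f) hxy) :=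
  dif_neg hxy

theorem ext_of_lt {H K : P ⥤ C} (hobj : ∀ x, H.obj x = K.obj x)
    (hmap : ∀ ⦃x y : P⦄ (h : x < y),
      H.map (homOfLE h.le) = eqToHom (hobj x) ≫ K.map (homOfLE h.le) ≫ eqToHom (hobj y).symm) :
    H = K := by
  refine Functor.ext hobj fun x y f => ?_
  obtain rfl | hxy := eq_or_ne x y
  · simp [Subsingleton.elim f (𝟙 x)]
  · exact hmap (lt_of_le_of_ne (leOfHom f) hxy)

variable {A B X : Type*} [Preorder A] [Preorder B] [Preorder X]

theorem ext_of_monotone_cover {f : A → X} {g : B → X} (hf : Monotone f) (hg : Monotone g)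
    (hcover : ∀ ⦃x y : X⦄, x ≤ y →
      (∃ a a', a ≤ a' ∧ f a = x ∧ f a' = y) ∨ ∃ b b', b ≤ b' ∧ g b = x ∧ g b' = y)
    {H K : X ⥤ C} (hHKf : hf.functor ⋙ H = hf.functor ⋙ K)
    (hHKg : hg.functor ⋙ H = hg.functor ⋙ K) : H = K := by
  refine Functor.ext (fun x => ?_) fun x y u => ?_
  · rcases hcover (le_refl x) with ⟨a, -, -, rfl, -⟩ | ⟨b, -, -, rfl, -⟩
    · exact congr_obj hHKf a
    · exact congr_obj hHKg b
  · rcases hcover (leOfHom u) with ⟨a, a', haa', rfl, rfl⟩ | ⟨b, b', hbb', rfl, rfl⟩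
    · exact congr_hom hHKf (homOfLE haa')
    · exact congr_hom hHKg (homOfLE hbb')

end CategoryTheory.Functor

namespace Lambda

theorem exists_edge_vertex_of_lt {k : ℕ} {x y : Lambda k} (h : x < y) :
    ∃ e v, x = edge e ∧ y = vertex v ∧ ((v : ℕ) = e ∨ (v : ℕ) = e + 1) := by
  rcases x with v | e <;> rcases y with w | f
  · exact (h.ne (congrArg Sum.inl (h.le : v = w))).elim
  · exact h.le.elim
  · exact ⟨e, w, rfl, rfl, h.le⟩
  · exact (h.ne (congrArg Sum.inr (h.le : e = f))).elim

theorem not_lt_of_lt {k : ℕ} ⦃x y z : Lambda k⦄ (hxy : x < y) : ¬ y < z := fun hyz => by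
  obtain ⟨-, v, -, rfl, -⟩ := exists_edge_vertex_of_lt hxy
  obtain ⟨e, -, he, -, -⟩ := exists_edge_vertex_of_lt hyz
  exact Sum.inl_ne_inr he

variable {m : ℕ}

theorem exists_iMap_or_jMap_of_le ⦃x y : Lambda (m + 1)⦄ (h : x ≤ y) :
    (∃ a a', a ≤ a' ∧ iMap m a = x ∧ iMap m a' = y) ∨
      ∃ b b', b ≤ b' ∧ jMap m b = x ∧ jMap m b' = y := by
  rcases x with v | e <;> rcases y with w | f
  · obtain rfl : v = w := h
    cases v using Fin.lastCases with
    | last => exact .inr ⟨vertex 1, vertex 1, le_rfl, rfl, rfl⟩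
    | cast v => exact .inl ⟨vertex v, vertex v, le_rfl, rfl, rfl⟩
  · exact h.elim
  · change (w : ℕ) = e ∨ (w : ℕ) = e + 1 at h
    cases e using Fin.lastCases with
    | last =>
      rw [Fin.val_last] at h
      refine .inr ⟨edge 0, vertex ⟨w - m, by omega⟩, ?_, rfl, ?_⟩
      · change (w : ℕ) - m = 0 ∨ (w : ℕ) - m = 0 + 1
        omega
      · exact congrArg Sum.inl (Fin.ext (by dsimp only; omega))
    | cast e =>
      cases w using Fin.lastCases with
      | last => rw [Fin.val_last, Fin.val_castSucc] at h; omega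
      | cast w => exact .inl ⟨edge e, vertex w, h, rfl, rfl⟩
  · obtain rfl : e = f := h
    cases e using Fin.lastCases with
    | last => exact .inr ⟨edge 0, edge 0, le_rfl, rfl, rfl⟩
    | cast e => exact .inl ⟨edge e, edge e, le_rfl, rfl, rfl⟩

theorem functor_ext {C : Type*} [Category C] {H K : Lambda (m + 1) ⥤ C}
    (hi : iF m ⋙ H = iF m ⋙ K) (hj : jF m ⋙ H = jF m ⋙ K) : H = K :=
  Functor.ext_of_monotone_cover (iMap_mono m) (jMap_mono m) exists_iMap_or_jMap_of_le hi hj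

section Glue

variable {C : Type*} [Category C] (F : Lambda m ⥤ C) (G : Lambda 1 ⥤ C)

def glueObj : Lambda (m + 1) → C
  | Sum.inl v => if h : (v : ℕ) ≤ m then F.obj (vertex ⟨v, by omega⟩) else G.obj (vertex 1)
  | Sum.inr e => if h : (e : ℕ) < m then F.obj (edge ⟨e, h⟩) else G.obj (edge 0)

variable {F G}

theorem glueObj_vertex_of_le {v : Fin (m + 2)} (hv : (v : ℕ) ≤ m) :
    glueObj F G (vertex v) = F.obj (vertex ⟨v, by omega⟩) :=
  dif_pos hv

theorem glueObj_vertex_of_not_le {v : Fin (m + 2)} (hv : ¬ (v : ℕ) ≤ m) :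
    glueObj F G (vertex v) = G.obj (vertex 1) :=
  dif_neg hv

theorem glueObj_edge_of_lt {e : Fin (m + 1)} (he : (e : ℕ) < m) :
    glueObj F G (edge e) = F.obj (edge ⟨e, he⟩) :=
  dif_pos he

theorem glueObj_edge_of_not_lt {e : Fin (m + 1)} (he : ¬ (e : ℕ) < m) :
    glueObj F G (edge e) = G.obj (edge 0) :=
  dif_neg he

theorem glueObj_iMap (a : Lambda m) : glueObj F G (iMap m a) = F.obj a := by
  rcases a with v | e
  · exact glueObj_vertex_of_le (Nat.le_of_lt_succ v.isLt)
  · exact glueObj_edge_of_lt e.isLt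

theorem glueObj_jMap (hFG : F.obj (vertex (Fin.last m)) = G.obj (vertex 0)) (b : Lambda 1) :
    glueObj F G (jMap m b) = G.obj b := by
  rcases b with v | e
  · fin_cases v
    · exact (glueObj_vertex_of_le (Nat.le_refl m)).trans hFG
    · exact glueObj_vertex_of_not_le (Nat.not_succ_le_self m)
  · fin_cases e
    exact glueObj_edge_of_not_lt (Nat.lt_irrefl m)

variable (hFG : F.obj (vertex (Fin.last m)) = G.obj (vertex 0))

def glueEdgeMap (e : Fin (m + 1)) (v : Fin (m + 2)) (h : (v : ℕ) = e ∨ (v : ℕ) = e + 1) :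
    glueObj F G (edge e) ⟶ glueObj F G (vertex v) :=
  if he : (e : ℕ) < m then
    have hv : (v : ℕ) ≤ m := by omega
    eqToHom (glueObj_edge_of_lt he) ≫
      F.map (homOfLE (show le (edge ⟨e, he⟩) (vertex ⟨v, by omega⟩) from h)) ≫
      eqToHom (glueObj_vertex_of_le hv).symm
  else if hv : (v : ℕ) ≤ m then
    have hvm : (⟨v, by omega⟩ : Fin (m + 1)) = Fin.last m := Fin.ext (by simp only [Fin.val_last]; omega)
    eqToHom (glueObj_edge_of_not_lt he) ≫
      G.map (homOfLE (show le (edge 0) (vertex 0) from Or.inl rfl)) ≫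
      eqToHom ((glueObj_vertex_of_le hv).trans (hvm ▸ hFG)).symm
  else
    eqToHom (glueObj_edge_of_not_lt he) ≫
      G.map (homOfLE (show le (edge 0) (vertex 1) from Or.inr rfl)) ≫
      eqToHom (glueObj_vertex_of_not_le hv).symm

def glueMap : ∀ ⦃x y : Lambda (m + 1)⦄, x < y → (glueObj F G x ⟶ glueObj F G y)
  | Sum.inr e, Sum.inl v, h => glueEdgeMap hFG e v h.le
  | Sum.inl _, _, h => False.elim (by obtain ⟨_, _, ⟨⟩, -⟩ := exists_edge_vertex_of_lt h)
  | Sum.inr _, Sum.inr _, h => False.elim (by obtain ⟨_, _, -, ⟨⟩, -⟩ := exists_edge_vertex_of_lt h)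

noncomputable def glue : Lambda (m + 1) ⥤ C :=
  Functor.ofLT not_lt_of_lt (glueObj F G) (glueMap hFG)

theorem glue_map_edge_vertex {e : Fin (m + 1)} {v : Fin (m + 2)} (f : edge e ⟶ vertex v) :
    (glue hFG).map f = glueEdgeMap hFG e v (leOfHom f) :=
  Functor.ofLT_map_of_ne _ _ _ f Sum.inr_ne_inl

theorem iF_comp_glue : iF m ⋙ glue hFG = F := by
  refine Functor.ext_of_lt glueObj_iMap fun x y h => ?_
  obtain ⟨e, v, rfl, rfl, -⟩ := exists_edge_vertex_of_lt h
  exact (glue_map_edge_vertex hFG (e := e.castSucc) (v := v.castSucc)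
    ((iF m).map (homOfLE h.le))).trans (dif_pos e.isLt)

theorem jF_comp_glue : jF m ⋙ glue hFG = G := by
  refine Functor.ext_of_lt (glueObj_jMap hFG) fun x y h => ?_
  obtain ⟨e, v, rfl, rfl, -⟩ := exists_edge_vertex_of_lt h
  refine (glue_map_edge_vertex hFG (e := Fin.last m) (v := ⟨m + v, by omega⟩)
    ((jF m).map (homOfLE h.le))).trans ((dif_neg (Nat.lt_irrefl m)).trans ?_)
  fin_cases e; fin_cases v
  · exact dif_pos le_rfl
  · exact dif_neg (Nat.not_succ_le_self m)

end Glue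

end Lambda

theorem uF_comp_iF (m : ℕ) : uF m ⋙ iF m = vF ⋙ jF m :=
  CategoryTheory.Functor.ext (fun _ => rfl) fun _ _ _ => Subsingleton.elim _ _

open Limits in
theorem isPushout_uF_vF_iF_jF (m : ℕ) :
    IsPushout (uF m).toCatHom vF.toCatHom (iF m).toCatHom (jF m).toCatHom := by
  have hFG (s : PushoutCocone (uF m).toCatHom vF.toCatHom) :
      s.inl.toFunctor.obj (Lambda.vertex (Fin.last m)) = s.inr.toFunctor.obj (Lambda.vertex 0) :=
    CategoryTheory.Functor.congr_obj (congrArg Cat.Hom.toFunctor s.condition) (Lambda.vertex 0)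
  refine IsPushout.of_isColimit (PushoutCocone.IsColimit.mk (f := (uF m).toCatHom)
    (g := vF.toCatHom) (inl := (iF m).toCatHom) (inr := (jF m).toCatHom) (Cat.ext (uF_comp_iF m)) (fun s => (Lambda.glue (hFG s)).toCatHom)
    (fun s => Cat.ext (Lambda.iF_comp_glue _)) (fun s => Cat.ext (Lambda.jF_comp_glue _))
    fun s n hn₁ hn₂ => Cat.ext (Lambda.functor_ext ?_ ?_))
  · exact (congrArg Cat.Hom.toFunctor hn₁).trans (Lambda.iF_comp_glue _).symm
  · exact (congrArg Cat.Hom.toFunctor hn₂).trans (Lambda.jF_comp_glue _).symm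

/-- for `k ≥ 1` (here `k = m + 1`) the square with corners
`Λ⁰, Λ^{k-1}, Λ¹, Λ^k`, with `u, v, i, j` as above, commutes (`i ∘ u = j ∘ v`) and is a
pushout square in `Cat`. -/
theorem stmt10 (m : ℕ) :
    (uF m ⋙ iF m = vF ⋙ jF m) ∧
    IsPushout
      (show Cat.of (Lambda 0) ⟶ Cat.of (Lambda m) from (uF m).toCatHom)
      (show Cat.of (Lambda 0) ⟶ Cat.of (Lambda 1) from vF.toCatHom)
      (show Cat.of (Lambda m) ⟶ Cat.of (Lambda (m + 1)) from (iF m).toCatHom)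
      (show Cat.of (Lambda 1) ⟶ Cat.of (Lambda (m + 1)) from (jF m).toCatHom) :=
  ⟨uF_comp_iF m, isPushout_uF_vF_iF_jF m⟩
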